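/- arXiv:0707.3731 — 5 statements merged into one kernel-verified Lean document; each statement's English description precedes it below -/
import Mathlib

section
/- Let 0 < s < 1 and let p satisfy 1 < p < 2 and p − s > 1. Let C₀ > 0 and let K : ℕ³ → ℂ satisfy |K(n,i,j)| ≤ C₀ (1 + |n − i − j|)^(−p) for all n, i, j ∈ ℕ. Then there exists a constant C > 0 such that for all sequences φ, ψ : ℕ → ℂ with ‖φ‖_{ℓ¹ₛ} < ∞ and ‖ψ‖_{ℓ¹ₛ} < ∞, the sequence defined by (φ ⋆ ψ)ₙ = Σ_{i∈ℕ} Σ_{j∈ℕ} K(n,i,j) φᵢ ψⱼ is well defined (the double series converges absolutely for each n) and satisfies ‖φ ⋆ ψ‖_{ℓ¹ₛ} ≤ C ‖φ‖_{ℓ¹ₛ} ‖ψ‖_{ℓ¹ₛ}. In particular, the weighted space ℓ¹ₛ(ℕ) is a Banach algebra under this kernel convolution. -/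
/-!
By Peetre's inequality `(1 + n)^s ≤ (1 + m)^s (1 + |n - m|)^s`, the weight at the output index `n`
can be traded for the weight at `m = i + j`, at the cost of lowering the decay exponent of the
kernel from `p` to `p - s > 1`. Hence the column sums `∑ₙ (1 + n)^s |K(n,i,j)|` are at most
`C₀ A (1 + i + j)^s ≤ C₀ A (1 + i)^s (1 + j)^s` with `A = ∑_{z ∈ ℤ} (1 + |z|)^(-(p - s))`.
Summing against `|φᵢ| |ψⱼ|` and exchanging the order of summation gives the bound with `C = C₀ A`.
-/

theorem summable_one_add_abs_int_rpow_neg {q : ℝ} (hq : 1 < q) :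
    Summable fun z : ℤ => (1 + |(z : ℝ)|) ^ (-q) := by
  have hnat : Summable fun n : ℕ => (1 + (n : ℝ)) ^ (-q) := by
    have hshift : Summable fun n : ℕ => ((n + 1 : ℕ) : ℝ) ^ (-q) :=
      (summable_nat_add_iff 1).mpr (Real.summable_nat_rpow.mpr (by linarith))
    exact hshift.congr fun n => by push_cast; ring_nf
  exact .of_nat_of_neg (by simpa using hnat) (by simpa using hnat)

theorem one_add_abs_rpow_le_mul_rpow {s : ℝ} (hs : 0 ≤ s) (x y : ℝ) :
    (1 + |x|) ^ s ≤ (1 + |y|) ^ s * (1 + |x - y|) ^ s := by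
  rw [← Real.mul_rpow (by positivity) (by positivity)]
  refine Real.rpow_le_rpow (by positivity) ?_ hs
  have hx : |x| ≤ |y| + |x - y| := by simpa using abs_add_le y (x - y)
  nlinarith [abs_nonneg y, abs_nonneg (x - y)]

theorem one_add_add_rpow_le_mul_rpow {s : ℝ} (hs : 0 ≤ s) (i j : ℕ) :
    (1 + (i + j : ℝ)) ^ s ≤ (1 + (i : ℝ)) ^ s * (1 + (j : ℝ)) ^ s := by
  simpa [abs_of_nonneg (by positivity : (0 : ℝ) ≤ i + j)] using
    one_add_abs_rpow_le_mul_rpow hs (i + j : ℝ) i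

theorem summable_and_tsum_rpow_mul_one_add_abs_sub_rpow_neg_le {s p : ℝ} (hs : 0 ≤ s)
    (hps : 1 < p - s) (m : ℕ) :
    Summable (fun n : ℕ => (1 + (n : ℝ)) ^ s * (1 + |(n : ℝ) - m|) ^ (-p)) ∧
      ∑' n : ℕ, (1 + (n : ℝ)) ^ s * (1 + |(n : ℝ) - m|) ^ (-p) ≤
        (1 + (m : ℝ)) ^ s * ∑' z : ℤ, (1 + |(z : ℝ)|) ^ (-(p - s)) := by
  have hsum := summable_one_add_abs_int_rpow_neg hps
  have hinj : Function.Injective fun n : ℕ => (n : ℤ) - m := fun a b hab => by simpa using hab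
  have hpt (n : ℕ) : (1 + (n : ℝ)) ^ s * (1 + |(n : ℝ) - m|) ^ (-p) ≤
      (1 + (m : ℝ)) ^ s * (1 + |(((n : ℤ) - m : ℤ) : ℝ)|) ^ (-(p - s)) := by
    have hpos : 0 < 1 + |(n : ℝ) - m| := by positivity
    have hweight := one_add_abs_rpow_le_mul_rpow hs (n : ℝ) m
    simp only [Nat.abs_cast] at hweight
    calc (1 + (n : ℝ)) ^ s * (1 + |(n : ℝ) - m|) ^ (-p)
        ≤ (1 + (m : ℝ)) ^ s * (1 + |(n : ℝ) - m|) ^ s * (1 + |(n : ℝ) - m|) ^ (-p) := by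
          gcongr
      _ = (1 + (m : ℝ)) ^ s * (1 + |(((n : ℤ) - m : ℤ) : ℝ)|) ^ (-(p - s)) := by
          rw [mul_assoc, ← Real.rpow_add hpos]
          push_cast
          ring_nf
  have hmaj := (hsum.comp_injective hinj).mul_left ((1 + (m : ℝ)) ^ s)
  have hsummable := Summable.of_nonneg_of_le (fun n => by positivity) hpt hmaj
  refine ⟨hsummable, (hsummable.tsum_le_tsum hpt hmaj).trans ?_⟩
  rw [tsum_mul_left]
  gcongr
  exact (hsum.comp_injective hinj).tsum_le_tsum_of_inj _ hinj (fun _ _ => by positivity)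
    (fun _ => le_rfl) hsum

theorem summable_and_tsum_tsum_le_of_nonneg {ι κ : Type*} {T : ι → κ → ℝ} {c : κ → ℝ}
    (hT : ∀ n k, 0 ≤ T n k) (hcol : ∀ k, Summable fun n => T n k)
    (hcol_le : ∀ k, ∑' n, T n k ≤ c k) (hc : Summable c) :
    (∀ n, Summable (T n)) ∧ Summable (fun n => ∑' k, T n k) ∧
      ∑' n, ∑' k, T n k ≤ ∑' k, c k := by
  have hcolsum : Summable fun k => ∑' n, T n k :=
    hc.of_nonneg_of_le (fun k => tsum_nonneg fun n => hT n k) hcol_le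
  have hswap : Summable fun x : κ × ι => T x.2 x.1 :=
    (summable_prod_of_nonneg fun x => hT _ _).2 ⟨hcol, hcolsum⟩
  obtain ⟨hrow, hrowsum⟩ := (summable_prod_of_nonneg fun x => hT _ _).1 hswap.prod_symm
  refine ⟨hrow, hrowsum, ?_⟩
  calc ∑' n, ∑' k, T n k = ∑' k, ∑' n, T n k := (hswap.prod_symm.tsum_comm' hrow hcol).symm
    _ ≤ ∑' k, c k := hcolsum.tsum_le_tsum hcol_le hc

theorem summable_and_tsum_weighted_norm_kernel_le {s p C₀ : ℝ} (hs : 0 ≤ s) (hps : 1 < p - s)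
    (hC₀ : 0 ≤ C₀) {K : ℕ → ℕ → ℕ → ℂ}
    (hK : ∀ n i j : ℕ, ‖K n i j‖ ≤ C₀ * (1 + |(n : ℤ) - i - j| : ℝ) ^ (-p)) (i j : ℕ) :
    Summable (fun n : ℕ => (1 + n : ℝ) ^ s * ‖K n i j‖) ∧
      ∑' n : ℕ, (1 + n : ℝ) ^ s * ‖K n i j‖ ≤
        C₀ * (∑' z : ℤ, (1 + |(z : ℝ)|) ^ (-(p - s))) * ((1 + i : ℝ) ^ s * (1 + j : ℝ) ^ s) := by
  obtain ⟨hsum, hle⟩ := summable_and_tsum_rpow_mul_one_add_abs_sub_rpow_neg_le hs hps (i + j)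
  have hpt (n : ℕ) : (1 + n : ℝ) ^ s * ‖K n i j‖ ≤
      C₀ * ((1 + (n : ℝ)) ^ s * (1 + |(n : ℝ) - ((i + j : ℕ) : ℝ)|) ^ (-p)) := by
    have hKn := hK n i j
    push_cast at hKn ⊢
    rw [← sub_sub, mul_left_comm]
    gcongr
  have hmaj := hsum.mul_left C₀
  have hsummable := Summable.of_nonneg_of_le (fun n => by positivity) hpt hmaj
  refine ⟨hsummable, (hsummable.tsum_le_tsum hpt hmaj).trans ?_⟩
  calc ∑' n : ℕ, C₀ * ((1 + (n : ℝ)) ^ s * (1 + |(n : ℝ) - ((i + j : ℕ) : ℝ)|) ^ (-p))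
      ≤ C₀ * ((1 + ((i + j : ℕ) : ℝ)) ^ s * ∑' z : ℤ, (1 + |(z : ℝ)|) ^ (-(p - s))) := by
        rw [tsum_mul_left]
        gcongr
    _ ≤ C₀ * ((1 + i : ℝ) ^ s * (1 + j : ℝ) ^ s * ∑' z : ℤ, (1 + |(z : ℝ)|) ^ (-(p - s))) := by
        gcongr
        push_cast
        exact one_add_add_rpow_le_mul_rpow hs i j
    _ = _ := by ring

theorem summable_and_tsum_weighted_norm_kernel_conv_le {ι α β 𝕜 : Type*}
    [NormedDivisionRing 𝕜] {K : ι → α → β → 𝕜} {w : ι → ℝ} {u : α → ℝ} {v : β → ℝ} {M : ℝ}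
    (hw : ∀ n, 0 < w n) (hu : ∀ i, 0 ≤ u i) (hv : ∀ j, 0 ≤ v j)
    (hK : ∀ i j, Summable fun n => w n * ‖K n i j‖)
    (hK_le : ∀ i j, ∑' n, w n * ‖K n i j‖ ≤ M * (u i * v j))
    {φ : α → 𝕜} {ψ : β → 𝕜} (hφ : Summable fun i => u i * ‖φ i‖)
    (hψ : Summable fun j => v j * ‖ψ j‖) :
    (∀ n, Summable fun ij : α × β => ‖K n ij.1 ij.2 * φ ij.1 * ψ ij.2‖) ∧
      Summable (fun n => w n * ‖∑' ij : α × β, K n ij.1 ij.2 * φ ij.1 * ψ ij.2‖) ∧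
      ∑' n, w n * ‖∑' ij : α × β, K n ij.1 ij.2 * φ ij.1 * ψ ij.2‖ ≤
        M * (∑' i, u i * ‖φ i‖) * (∑' j, v j * ‖ψ j‖) := by
  set T : ι → α × β → ℝ := fun n ij => w n * ‖K n ij.1 ij.2 * φ ij.1 * ψ ij.2‖
  set c : α × β → ℝ := fun ij => M * (u ij.1 * ‖φ ij.1‖ * (v ij.2 * ‖ψ ij.2‖))
  have hT (n : ι) (ij : α × β) : T n ij = ‖φ ij.1‖ * ‖ψ ij.2‖ * (w n * ‖K n ij.1 ij.2‖) := by
    simp only [T, norm_mul]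
    ring
  have hc : Summable c :=
    (hφ.mul_of_nonneg hψ (fun i => mul_nonneg (hu i) (norm_nonneg _))
      (fun j => mul_nonneg (hv j) (norm_nonneg _))).mul_left M
  have hT_le (ij : α × β) : ∑' n, T n ij ≤ c ij := by
    simp_rw [hT, tsum_mul_left]
    calc _ ≤ ‖φ ij.1‖ * ‖ψ ij.2‖ * (M * (u ij.1 * v ij.2)) := by
          gcongr
          exact hK_le ij.1 ij.2
      _ = c ij := by ring
  obtain ⟨hrow, hrowsum, hle⟩ := summable_and_tsum_tsum_le_of_nonneg (T := T)
    (fun n ij => mul_nonneg (hw n).le (norm_nonneg _))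
    (fun ij => by simp_rw [hT]; exact (hK ij.1 ij.2).mul_left _) hT_le hc
  have hwell (n : ι) : Summable fun ij : α × β => ‖K n ij.1 ij.2 * φ ij.1 * ψ ij.2‖ :=
    (summable_mul_left_iff (hw n).ne').1 (hrow n)
  have hnorm (n : ι) : w n * ‖∑' ij : α × β, K n ij.1 ij.2 * φ ij.1 * ψ ij.2‖ ≤ ∑' ij, T n ij := by
    rw [tsum_mul_left]
    exact mul_le_mul_of_nonneg_left (norm_tsum_le_tsum_norm (hwell n)) (hw n).le
  have hconv := hrowsum.of_nonneg_of_le (fun n => mul_nonneg (hw n).le (norm_nonneg _)) hnorm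
  have hprod : ∑' ij, c ij = M * (∑' i, u i * ‖φ i‖) * (∑' j, v j * ‖ψ j‖) := by
    rw [tsum_mul_left, ← tsum_mul_tsum_of_summable_norm hφ.norm hψ.norm, mul_assoc]
  refine ⟨hwell, hconv, ?_⟩
  calc _ ≤ ∑' n, ∑' ij, T n ij := hconv.tsum_le_tsum hnorm hrowsum
    _ ≤ ∑' ij, c ij := hle
    _ = _ := hprod

theorem l1s_kernel_convolution_banach_algebra_general
    (s p C₀ : ℝ) (hs0 : 0 < s)
    (hps : 1 < p - s) (hC₀ : 0 < C₀)
    (K : ℕ → ℕ → ℕ → ℂ)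
    (hK : ∀ n i j : ℕ, ‖K n i j‖ ≤ C₀ * (1 + |(n : ℤ) - i - j| : ℝ) ^ (-p)) :
    ∃ C > 0, ∀ φ ψ : ℕ → ℂ,
      Summable (fun n : ℕ => (1 + n : ℝ) ^ s * ‖φ n‖) →
      Summable (fun n : ℕ => (1 + n : ℝ) ^ s * ‖ψ n‖) →
      (∀ n : ℕ, Summable (fun ij : ℕ × ℕ => ‖K n ij.1 ij.2 * φ ij.1 * ψ ij.2‖)) ∧
      Summable (fun n : ℕ =>
        (1 + n : ℝ) ^ s * ‖∑' ij : ℕ × ℕ, K n ij.1 ij.2 * φ ij.1 * ψ ij.2‖) ∧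
      (∑' n : ℕ, (1 + n : ℝ) ^ s * ‖∑' ij : ℕ × ℕ, K n ij.1 ij.2 * φ ij.1 * ψ ij.2‖) ≤
        C * (∑' n : ℕ, (1 + n : ℝ) ^ s * ‖φ n‖) * (∑' n : ℕ, (1 + n : ℝ) ^ s * ‖ψ n‖) := by
  set A := ∑' z : ℤ, (1 + |(z : ℝ)|) ^ (-(p - s))
  have hA : 0 < A :=
    (summable_one_add_abs_int_rpow_neg hps).tsum_pos (fun _ => by positivity) 0 (by simp)
  refine ⟨C₀ * A, by positivity, fun φ ψ hφ hψ => ?_⟩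
  have hcol := summable_and_tsum_weighted_norm_kernel_le hs0.le hps hC₀.le hK
  exact summable_and_tsum_weighted_norm_kernel_conv_le (fun n => by positivity)
    (fun i => by positivity) (fun j => by positivity) (fun i j => (hcol i j).1)
    (fun i j => (hcol i j).2) hφ hψ

/-- Banach-algebra property of the weighted space `ℓ¹ₛ(ℕ)` under a
kernel convolution with a kernel decaying like `(1 + |n - i - j|)^(-p)`. -/
theorem l1s_kernel_convolution_banach_algebra
    (s p C₀ : ℝ) (hs0 : 0 < s) (hs1 : s < 1)
    (hp1 : 1 < p) (hp2 : p < 2) (hps : 1 < p - s) (hC₀ : 0 < C₀)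
    (K : ℕ → ℕ → ℕ → ℂ)
    (hK : ∀ n i j : ℕ, ‖K n i j‖ ≤ C₀ * (1 + |(n : ℤ) - i - j| : ℝ) ^ (-p)) :
    ∃ C > 0, ∀ φ ψ : ℕ → ℂ,
      Summable (fun n : ℕ => (1 + n : ℝ) ^ s * ‖φ n‖) →
      Summable (fun n : ℕ => (1 + n : ℝ) ^ s * ‖ψ n‖) →
      (∀ n : ℕ, Summable (fun ij : ℕ × ℕ => ‖K n ij.1 ij.2 * φ ij.1 * ψ ij.2‖)) ∧
      Summable (fun n : ℕ =>
        (1 + n : ℝ) ^ s * ‖∑' ij : ℕ × ℕ, K n ij.1 ij.2 * φ ij.1 * ψ ij.2‖) ∧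
      (∑' n : ℕ, (1 + n : ℝ) ^ s * ‖∑' ij : ℕ × ℕ, K n ij.1 ij.2 * φ ij.1 * ψ ij.2‖) ≤
        C * (∑' n : ℕ, (1 + n : ℝ) ^ s * ‖φ n‖) * (∑' n : ℕ, (1 + n : ℝ) ^ s * ‖ψ n‖) :=
  l1s_kernel_convolution_banach_algebra_general s p C₀ hs0 hps hC₀ K hK
end

section
/- Let p > 1 and 0 < s < p − 1. Then there exists a constant C > 0 such that for all i, j ∈ ℕ: Σ_{n∈ℕ} ((1+n)/((1+i)(1+j)))^s · (1 + |n − i − j|)^(−p) ≤ C, i.e. the sum is bounded uniformly in i and j. -/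
/-! Since `1 + n ≤ (1 + i)(1 + j)(1 + |n - i - j|)`, the `n`-th term is at most
`(1 + |n - i - j|) ^ (s - p)`: the weight is absorbed by the kernel at the cost of lowering its
decay exponent from `p` to `p - s > 1`. Summing over `n ∈ ℕ` is then dominated by summing the
translate of the summable sequence `z ↦ (1 + |z|) ^ (s - p)` over all of `ℤ`, whose value does not
depend on the translation `i + j`. -/

open Real

lemma one_add_le_one_add_mul_one_add_mul_one_add_abs {x y : ℝ} (hx : 0 ≤ x) (hy : 0 ≤ y)
    (z : ℝ) : 1 + z ≤ (1 + x) * (1 + y) * (1 + |z - x - y|) := by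
  nlinarith [le_abs_self (z - x - y), abs_nonneg (z - x - y), mul_nonneg hx hy,
    mul_nonneg (mul_nonneg hx hy) (abs_nonneg (z - x - y))]

lemma div_rpow_mul_one_add_abs_rpow_neg_le {s p x y z : ℝ} (hs : 0 ≤ s) (hx : 0 ≤ x)
    (hy : 0 ≤ y) (hz : 0 ≤ 1 + z) :
    ((1 + z) / ((1 + x) * (1 + y))) ^ s * (1 + |z - x - y|) ^ (-p) ≤
      (1 + |z - x - y|) ^ (s - p) := by
  have hratio : (1 + z) / ((1 + x) * (1 + y)) ≤ 1 + |z - x - y| := by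
    rw [div_le_iff₀ (by positivity), mul_comm]
    exact one_add_le_one_add_mul_one_add_mul_one_add_abs hx hy z
  calc ((1 + z) / ((1 + x) * (1 + y))) ^ s * (1 + |z - x - y|) ^ (-p)
      ≤ (1 + |z - x - y|) ^ s * (1 + |z - x - y|) ^ (-p) := by
        gcongr
    _ = (1 + |z - x - y|) ^ (s - p) := by
        rw [sub_eq_add_neg s p, rpow_add (by positivity)]

lemma summable_one_add_abs_int_rpow {b : ℝ} (hb : b < -1) :
    Summable fun z : ℤ => (1 + |(z : ℝ)|) ^ b := by
  have hnat : Summable fun n : ℕ => (1 + (n : ℝ)) ^ b := by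
    have := (summable_nat_add_iff 1).mpr (Real.summable_nat_rpow.mpr hb)
    simpa [add_comm] using this
  exact .of_nat_of_neg (by simpa using hnat) (by simpa using hnat)

lemma summable_natCast_sub {g : ℤ → ℝ} (hg : Summable g) (m : ℤ) :
    Summable fun n : ℕ => g (n - m) :=
  ((Equiv.subRight m).summable_iff.mpr hg).comp_injective Nat.cast_injective

lemma tsum_natCast_sub_le {g : ℤ → ℝ} (hg : Summable g) (hg0 : 0 ≤ g) (m : ℤ) :
    ∑' n : ℕ, g (n - m) ≤ ∑' z, g z :=
  calc ∑' n : ℕ, g (n - m)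
      ≤ ∑' z : ℤ, g (z - m) :=
        (summable_natCast_sub hg m).tsum_le_tsum_of_inj _ Nat.cast_injective
          (fun _ _ => hg0 _) (fun _ => le_rfl) ((Equiv.subRight m).summable_iff.mpr hg)
    _ = ∑' z, g z := (Equiv.subRight m).tsum_eq g

theorem weighted_kernel_sum_uniformly_bounded_general
    (p s : ℝ) (hs0 : 0 < s) (hsp : s < p - 1) :
    ∃ C > 0, ∀ i j : ℕ,
      Summable (fun n : ℕ =>
        ((1 + n : ℝ) / ((1 + i) * (1 + j))) ^ s * (1 + |(n : ℤ) - i - j| : ℝ) ^ (-p)) ∧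
      (∑' n : ℕ,
        ((1 + n : ℝ) / ((1 + i) * (1 + j))) ^ s * (1 + |(n : ℤ) - i - j| : ℝ) ^ (-p)) ≤ C := by
  set K : ℤ → ℝ := fun z => (1 + |(z : ℝ)|) ^ (s - p)
  have hK : Summable K := summable_one_add_abs_int_rpow (by linarith)
  have hK0 : 0 ≤ K := fun z => by positivity
  refine ⟨∑' z, K z, hK.tsum_pos hK0 0 (by positivity), fun i j => ?_⟩
  have hbound : ∀ n : ℕ,
      ((1 + n : ℝ) / ((1 + i) * (1 + j))) ^ s * (1 + |(n : ℤ) - i - j| : ℝ) ^ (-p) ≤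
        K (n - (i + j)) := fun n => by
    have := div_rpow_mul_one_add_abs_rpow_neg_le (p := p) hs0.le (Nat.cast_nonneg' i)
      (Nat.cast_nonneg' j) (by positivity : (0 : ℝ) ≤ 1 + n)
    simpa [K, sub_sub] using this
  have hsum := (summable_natCast_sub hK _).of_nonneg_of_le (fun n => by positivity) hbound
  exact ⟨hsum, (hsum.tsum_le_tsum hbound (summable_natCast_sub hK _)).trans
    (tsum_natCast_sub_le hK hK0 _)⟩

/-- the sum `Σ_n ((1+n)/((1+i)(1+j)))^s (1+|n-i-j|)^(-p)` is bounded
uniformly in `i, j ∈ ℕ` when `p > 1` and `0 < s < p - 1`. -/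
theorem weighted_kernel_sum_uniformly_bounded
    (p s : ℝ) (hp : 1 < p) (hs0 : 0 < s) (hsp : s < p - 1) :
    ∃ C > 0, ∀ i j : ℕ,
      Summable (fun n : ℕ =>
        ((1 + n : ℝ) / ((1 + i) * (1 + j))) ^ s * (1 + |(n : ℤ) - i - j| : ℝ) ^ (-p)) ∧
      (∑' n : ℕ,
        ((1 + n : ℝ) / ((1 + i) * (1 + j))) ^ s * (1 + |(n : ℤ) - i - j| : ℝ) ^ (-p)) ≤ C :=
  weighted_kernel_sum_uniformly_bounded_general p s hs0 hsp
end

section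
/- Let 0 < s < 1 and let p satisfy 1 < p < 2 and p − s > 1. Let C₀ > 0 and let K₁, K₂ : ℕ³ → ℂ each satisfy |Kₗ(a,b,c)| ≤ C₀ (1 + |a − b − c|)^(−p) for all a, b, c ∈ ℕ and l = 1, 2. Define the separable kernel K(n,i,j) = K₁(n₁,i₁,j₁) · K₂(n₂,i₂,j₂) for n = (n₁,n₂), i = (i₁,i₂), j = (j₁,j₂) ∈ ℕ². Then there exists C > 0 such that for all Φ, Ψ : ℕ² → ℂ with ‖Φ‖_{ℓ¹ₛ(ℕ²)} < ∞ and ‖Ψ‖_{ℓ¹ₛ(ℕ²)} < ∞, the double convolution (Φ ⋆ Ψ)ₙ = Σ_{i∈ℕ²} Σ_{j∈ℕ²} K(n,i,j) Φᵢ Ψⱼ converges absolutely for each n ∈ ℕ² and satisfies ‖Φ ⋆ Ψ‖_{ℓ¹ₛ(ℕ²)} ≤ C ‖Φ‖_{ℓ¹ₛ(ℕ²)} ‖Ψ‖_{ℓ¹ₛ(ℕ²)}. -/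
lemma aux_base_summable {q : ℝ} (hq : 1 < q) :
    Summable (fun k : ℕ => (1 + k : ℝ) ^ (-q)) := by
  have h0 : Summable (fun n : ℕ => (n : ℝ) ^ (-q)) :=
    Real.summable_nat_rpow.mpr (by linarith)
  have h1 := (summable_nat_add_iff (f := fun n : ℕ => (n : ℝ) ^ (-q)) 1).2 h0
  refine h1.congr fun n => ?_
  push_cast
  ring_nf

lemma aux_shift_summable {q : ℝ} (hq : 1 < q) (m : ℕ) :
    Summable (fun n : ℕ => (1 + |(n : ℤ) - m| : ℝ) ^ (-q)) := by
  refine (summable_nat_add_iff m).1 ?_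
  refine (aux_base_summable hq).congr fun n => ?_
  have : |((n + m : ℕ) : ℤ) - m| = (n : ℤ) := by
    push_cast; rw [add_sub_cancel_right, abs_of_nonneg (by positivity)]
  rw [this]
  norm_num

lemma aux_shift_tsum_le {q : ℝ} (hq : 1 < q) (m : ℕ) :
    (∑' n : ℕ, (1 + |(n : ℤ) - m| : ℝ) ^ (-q)) ≤ 2 * ∑' k : ℕ, (1 + k : ℝ) ^ (-q) := by
  set f : ℕ → ℝ := fun n => (1 + |(n : ℤ) - m| : ℝ) ^ (-q) with hf
  have hT := aux_base_summable hq
  have hfs := aux_shift_summable hq m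
  have hsplit := Summable.sum_add_tsum_nat_add (f := f) m hfs
  have htail : (∑' n : ℕ, f (n + m)) = ∑' k : ℕ, (1 + k : ℝ) ^ (-q) := by
    refine tsum_congr fun n => ?_
    simp only [hf]
    have : |((n + m : ℕ) : ℤ) - m| = (n : ℤ) := by
      push_cast; rw [add_sub_cancel_right, abs_of_nonneg (by positivity)]
    rw [this]; norm_num
  have hhead : (∑ i ∈ Finset.range m, f i) ≤ ∑' k : ℕ, (1 + k : ℝ) ^ (-q) := by
    have hre : (∑ i ∈ Finset.range m, f i) = ∑ j ∈ Finset.range m, f (m - 1 - j) :=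
      (Finset.sum_range_reflect f m).symm
    rw [hre]
    calc ∑ j ∈ Finset.range m, f (m - 1 - j)
        ≤ ∑ j ∈ Finset.range m, (1 + j : ℝ) ^ (-q) := by
          refine Finset.sum_le_sum fun j hj => ?_
          have hjm : j < m := Finset.mem_range.1 hj
          have hcast : |((m - 1 - j : ℕ) : ℤ) - m| = (j : ℤ) + 1 := by
            have : ((m - 1 - j : ℕ) : ℤ) = (m : ℤ) - 1 - j := by omega
            rw [this]
            have : (m : ℤ) - 1 - j - m = -(j + 1) := by ring
            rw [this, abs_neg, abs_of_nonneg (by positivity)]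
          simp only [hf, hcast]
          push_cast
          exact Real.rpow_le_rpow_of_nonpos (by positivity) (by linarith) (by linarith)
      _ ≤ ∑' k : ℕ, (1 + k : ℝ) ^ (-q) :=
          Summable.sum_le_tsum _ (fun i _ => by positivity) hT
  linarith [hsplit, htail, hhead]

lemma aux_weighted (s p : ℝ) (hs0 : 0 < s) (hps : 1 < p - s) :
    ∀ m : ℕ,
      Summable (fun n : ℕ => (1 + n : ℝ) ^ s * (1 + |(n : ℤ) - m| : ℝ) ^ (-p)) ∧
      (∑' n : ℕ, (1 + n : ℝ) ^ s * (1 + |(n : ℤ) - m| : ℝ) ^ (-p)) ≤ (2 * (∑' k : ℕ, (1 + k : ℝ) ^ (-(p - s))) + 1) * (1 + m : ℝ) ^ s := by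
  set q := p - s with hqdef
  set T := ∑' k : ℕ, (1 + k : ℝ) ^ (-q) with hTdef
  have hT0 : 0 ≤ T := tsum_nonneg (fun k => by positivity)
  intro m
  have hpt : ∀ n : ℕ, (1 + n : ℝ) ^ s * (1 + |(n : ℤ) - m| : ℝ) ^ (-p)
      ≤ (1 + m : ℝ) ^ s * (1 + |(n : ℤ) - m| : ℝ) ^ (-q) := by
    intro n
    set x : ℝ := (1 + |(n : ℤ) - m| : ℝ) with hx
    have h2' : (0:ℝ) ≤ ((|(n:ℤ) - (m:ℤ)| : ℤ) : ℝ) := by exact_mod_cast abs_nonneg ((n:ℤ) - m)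
    have hx0 : 0 < x := by rw [hx]; linarith
    have hnx : (1 + n : ℝ) ≤ x * (1 + m) := by
      have h1' : (n:ℝ) - m ≤ ((|(n:ℤ) - (m:ℤ)| : ℤ) : ℝ) := by exact_mod_cast le_abs_self ((n:ℤ) - m)
      have hm : (0:ℝ) ≤ (m:ℝ) := Nat.cast_nonneg m
      rw [hx]; nlinarith
    have h1 : (1 + n : ℝ) ^ s ≤ x ^ s * (1 + m : ℝ) ^ s := by
      rw [← Real.mul_rpow (le_of_lt hx0) (by positivity)]
      exact Real.rpow_le_rpow (by positivity) hnx (le_of_lt hs0)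
    have hexp : s + -p = -q := by rw [hqdef]; ring
    calc (1 + n : ℝ) ^ s * x ^ (-p) ≤ (x ^ s * (1 + m:ℝ)^s) * x ^ (-p) :=
          mul_le_mul_of_nonneg_right h1 (by positivity)
      _ = (1 + m:ℝ)^s * (x ^ s * x ^ (-p)) := by ring
      _ = (1 + m:ℝ)^s * x ^ (-q) := by rw [← Real.rpow_add hx0, hexp]
  have hq1 : 1 < q := hps
  have hgs := aux_shift_summable hq1 m
  have hsum : Summable (fun n : ℕ => (1 + n : ℝ) ^ s * (1 + |(n : ℤ) - m| : ℝ) ^ (-p)) :=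
    Summable.of_nonneg_of_le (fun n => by positivity) hpt (hgs.mul_left _)
  refine ⟨hsum, ?_⟩
  have hm0 : (0:ℝ) ≤ (1 + m : ℝ) ^ s := by positivity
  calc (∑' n : ℕ, (1 + n : ℝ) ^ s * (1 + |(n : ℤ) - m| : ℝ) ^ (-p))
      ≤ ∑' n : ℕ, (1 + m : ℝ) ^ s * (1 + |(n : ℤ) - m| : ℝ) ^ (-q) :=
        Summable.tsum_le_tsum hpt hsum (hgs.mul_left _)
    _ = (1 + m : ℝ) ^ s * ∑' n : ℕ, (1 + |(n : ℤ) - m| : ℝ) ^ (-q) := tsum_mul_left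
    _ ≤ (1 + m : ℝ) ^ s * (2 * T) :=
        mul_le_mul_of_nonneg_left (aux_shift_tsum_le hq1 m) hm0
    _ ≤ (2 * T + 1) * (1 + m : ℝ) ^ s := by nlinarith

noncomputable def auxκ (C₀ p : ℝ) (a b c : ℕ) : ℝ := C₀ * (1 + |(a : ℤ) - b - c| : ℝ) ^ (-p)
noncomputable def auxw (s : ℝ) (a : ℕ) : ℝ := (1 + a : ℝ) ^ s

lemma auxw_nonneg (s : ℝ) (a : ℕ) : 0 ≤ auxw s a := by unfold auxw; positivity
lemma auxκ_nonneg {C₀ p : ℝ} (hC₀ : 0 < C₀) (a b c : ℕ) : 0 ≤ auxκ C₀ p a b c := by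
  unfold auxκ; positivity

lemma auxw_one_le {s : ℝ} (hs0 : 0 < s) (a : ℕ) : 1 ≤ auxw s a := by
  unfold auxw
  exact Real.one_le_rpow (by exact_mod_cast le_add_of_nonneg_right (Nat.cast_nonneg a)) hs0.le

lemma aux_col (s p C₀ : ℝ) (hs0 : 0 < s) (hps : 1 < p - s) (hC₀ : 0 < C₀) (b c : ℕ) :
    Summable (fun a : ℕ => auxw s a * auxκ C₀ p a b c) ∧
    (∑' a : ℕ, auxw s a * auxκ C₀ p a b c) ≤
      (C₀ * (2 * (∑' k : ℕ, (1 + k : ℝ) ^ (-(p - s))) + 1)) * (auxw s b * auxw s c) := by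
  obtain ⟨h1, h2⟩ := aux_weighted s p hs0 hps (b + c)
  have hcast : ∀ a : ℕ, (1 + |(a : ℤ) - ((b + c : ℕ) : ℤ)| : ℝ) = (1 + |(a : ℤ) - b - c| : ℝ) := by
    intro a; congr 2; push_cast; ring_nf
  have hfun : ∀ a : ℕ, auxw s a * auxκ C₀ p a b c
      = C₀ * ((1 + a : ℝ) ^ s * (1 + |(a : ℤ) - ((b + c : ℕ) : ℤ)| : ℝ) ^ (-p)) := by
    intro a; rw [hcast a]; unfold auxw auxκ; ring
  constructor
  · exact (h1.mul_left C₀).congr fun a => (hfun a).symm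
  · have heq : (∑' a : ℕ, auxw s a * auxκ C₀ p a b c)
        = C₀ * ∑' a : ℕ, (1 + a : ℝ) ^ s * (1 + |(a : ℤ) - ((b + c : ℕ) : ℤ)| : ℝ) ^ (-p) := by
      rw [← tsum_mul_left]; exact tsum_congr hfun
    rw [heq]
    have hmw : (1 + ((b + c : ℕ) : ℝ)) ^ s ≤ auxw s b * auxw s c := by
      unfold auxw
      rw [← Real.mul_rpow (by positivity) (by positivity)]
      refine Real.rpow_le_rpow (by positivity) ?_ hs0.le
      push_cast
      nlinarith [Nat.cast_nonneg (α := ℝ) b, Nat.cast_nonneg (α := ℝ) c]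
    set T := ∑' k : ℕ, (1 + k : ℝ) ^ (-(p - s)) with hT
    have hT0 : 0 ≤ T := tsum_nonneg fun k => by positivity
    calc C₀ * ∑' a : ℕ, (1 + a : ℝ) ^ s * (1 + |(a : ℤ) - ((b + c : ℕ) : ℤ)| : ℝ) ^ (-p)
        ≤ C₀ * ((2 * T + 1) * (1 + ((b + c : ℕ) : ℝ)) ^ s) :=
          mul_le_mul_of_nonneg_left h2 hC₀.le
      _ ≤ C₀ * ((2 * T + 1) * (auxw s b * auxw s c)) := by
          have := mul_le_mul_of_nonneg_left hmw (by linarith : (0:ℝ) ≤ 2 * T + 1)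
          exact mul_le_mul_of_nonneg_left this hC₀.le
      _ = (C₀ * (2 * T + 1)) * (auxw s b * auxw s c) := by ring

lemma aux_mul_le {w1 w2 k1 k2 c1 c2 f g : ℝ} (hw1 : 0 ≤ w1) (hw2 : 0 ≤ w2)
    (hk1 : 0 ≤ k1) (hk2 : 0 ≤ k2) (hf : 0 ≤ f) (hg : 0 ≤ g)
    (h1 : k1 ≤ c1) (h2 : k2 ≤ c2) :
    w1 * w2 * (k1 * k2 * f * g) ≤ (f * g) * ((w1 * c1) * (w2 * c2)) := by
  have hA : w1 * k1 ≤ w1 * c1 := mul_le_mul_of_nonneg_left h1 hw1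
  have hB : w2 * k2 ≤ w2 * c2 := mul_le_mul_of_nonneg_left h2 hw2
  have hP : (w1 * k1) * (w2 * k2) ≤ (w1 * c1) * (w2 * c2) :=
    mul_le_mul hA hB (mul_nonneg hw2 hk2) (mul_nonneg hw1 (hk1.trans h1))
  calc w1 * w2 * (k1 * k2 * f * g) = ((w1 * k1) * (w2 * k2)) * (f * g) := by ring
    _ ≤ ((w1 * c1) * (w2 * c2)) * (f * g) :=
        mul_le_mul_of_nonneg_right hP (mul_nonneg hf hg)
    _ = (f * g) * ((w1 * c1) * (w2 * c2)) := by ring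
set_option maxHeartbeats 1000000 in
/-- Banach-algebra property of the weighted space `ℓ¹ₛ(ℕ²)` under the
double convolution with a separable kernel `K(n,i,j) = K₁(n₁,i₁,j₁) K₂(n₂,i₂,j₂)`,
each factor decaying like `(1 + |a - b - c|)^(-p)`. -/
theorem l1s_separable_kernel_convolution_banach_algebra
    (s p C₀ : ℝ) (hs0 : 0 < s) (hs1 : s < 1)
    (hp1 : 1 < p) (hp2 : p < 2) (hps : 1 < p - s) (hC₀ : 0 < C₀)
    (K₁ K₂ : ℕ → ℕ → ℕ → ℂ)
    (hK₁ : ∀ a b c : ℕ, ‖K₁ a b c‖ ≤ C₀ * (1 + |(a : ℤ) - b - c| : ℝ) ^ (-p))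
    (hK₂ : ∀ a b c : ℕ, ‖K₂ a b c‖ ≤ C₀ * (1 + |(a : ℤ) - b - c| : ℝ) ^ (-p)) :
    ∃ C > 0, ∀ Φ Ψ : ℕ × ℕ → ℂ,
      Summable (fun n : ℕ × ℕ => (1 + n.1 : ℝ) ^ s * (1 + n.2 : ℝ) ^ s * ‖Φ n‖) →
      Summable (fun n : ℕ × ℕ => (1 + n.1 : ℝ) ^ s * (1 + n.2 : ℝ) ^ s * ‖Ψ n‖) →
      (∀ n : ℕ × ℕ, Summable (fun ij : (ℕ × ℕ) × (ℕ × ℕ) =>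
        ‖K₁ n.1 ij.1.1 ij.2.1 * K₂ n.2 ij.1.2 ij.2.2 * Φ ij.1 * Ψ ij.2‖)) ∧
      Summable (fun n : ℕ × ℕ => (1 + n.1 : ℝ) ^ s * (1 + n.2 : ℝ) ^ s *
        ‖∑' ij : (ℕ × ℕ) × (ℕ × ℕ), K₁ n.1 ij.1.1 ij.2.1 * K₂ n.2 ij.1.2 ij.2.2 * Φ ij.1 * Ψ ij.2‖) ∧
      (∑' n : ℕ × ℕ, (1 + n.1 : ℝ) ^ s * (1 + n.2 : ℝ) ^ s *
        ‖∑' ij : (ℕ × ℕ) × (ℕ × ℕ), K₁ n.1 ij.1.1 ij.2.1 * K₂ n.2 ij.1.2 ij.2.2 * Φ ij.1 * Ψ ij.2‖) ≤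
        C * (∑' n : ℕ × ℕ, (1 + n.1 : ℝ) ^ s * (1 + n.2 : ℝ) ^ s * ‖Φ n‖) *
          (∑' n : ℕ × ℕ, (1 + n.1 : ℝ) ^ s * (1 + n.2 : ℝ) ^ s * ‖Ψ n‖) := by
  classical
  set T := ∑' k : ℕ, (1 + k : ℝ) ^ (-(p - s)) with hT
  have hT0 : 0 ≤ T := tsum_nonneg fun k => by positivity
  set B := C₀ * (2 * T + 1) with hB
  have hB0 : 0 < B := mul_pos hC₀ (by linarith)
  refine ⟨B ^ 2, pow_pos hB0 2, fun Φ Ψ hΦ hΨ => ?_⟩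
  set F : ℕ × ℕ → ℝ := fun i => ‖Φ i‖ with hF
  set G : ℕ × ℕ → ℝ := fun j => ‖Ψ j‖ with hG
  set H : ((ℕ × ℕ) × (ℕ × ℕ)) × (ℕ × ℕ) → ℝ := fun x =>
    (F x.1.1 * G x.1.2) * ((auxw s x.2.1 * auxκ C₀ p x.2.1 x.1.1.1 x.1.2.1) *
      (auxw s x.2.2 * auxκ C₀ p x.2.2 x.1.1.2 x.1.2.2)) with hHdef
  have hHnn : ∀ x, 0 ≤ H x := fun x =>
    mul_nonneg (mul_nonneg (norm_nonneg _) (norm_nonneg _))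
      (mul_nonneg (mul_nonneg (auxw_nonneg _ _) (auxκ_nonneg hC₀ _ _ _))
        (mul_nonneg (auxw_nonneg _ _) (auxκ_nonneg hC₀ _ _ _)))
  have hwnn : ∀ a : ℕ, (0:ℝ) ≤ auxw s a := auxw_nonneg s
  have hκnn : ∀ a b c : ℕ, (0:ℝ) ≤ auxκ C₀ p a b c := auxκ_nonneg hC₀
  have hΦ' : Summable (fun i : ℕ × ℕ => auxw s i.1 * auxw s i.2 * F i) := hΦ
  have hΨ' : Summable (fun j : ℕ × ℕ => auxw s j.1 * auxw s j.2 * G j) := hΨ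
  -- column summability and bounds, with constants folded
  have hcol := fun b c => aux_col s p C₀ hs0 hps hC₀ b c
  have hcolb : ∀ b c : ℕ, (∑' a : ℕ, auxw s a * auxκ C₀ p a b c) ≤ B * (auxw s b * auxw s c) := by
    intro b c
    have h := (hcol b c).2
    rw [← hT, ← hB] at h
    exact h
  -- sections over n are summable
  have hsec : ∀ ij : (ℕ × ℕ) × (ℕ × ℕ), Summable (fun n : ℕ × ℕ => H (ij, n)) := by
    intro ij
    exact (((hcol ij.1.1 ij.2.1).1).mul_of_nonneg ((hcol ij.1.2 ij.2.2).1)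
      (fun a => mul_nonneg (hwnn a) (hκnn a _ _))
      (fun a => mul_nonneg (hwnn a) (hκnn a _ _))).mul_left (F ij.1 * G ij.2)
  -- bound on column sums
  have hcolsum : ∀ ij : (ℕ × ℕ) × (ℕ × ℕ), (∑' n : ℕ × ℕ, H (ij, n)) ≤
      B ^ 2 * ((auxw s ij.1.1 * auxw s ij.1.2 * F ij.1) * (auxw s ij.2.1 * auxw s ij.2.2 * G ij.2)) := by
    intro ij
    have hs1a := (hcol ij.1.1 ij.2.1).1
    have hs2a := (hcol ij.1.2 ij.2.2).1
    have hprod : Summable (fun n : ℕ × ℕ =>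
        (auxw s n.1 * auxκ C₀ p n.1 ij.1.1 ij.2.1) * (auxw s n.2 * auxκ C₀ p n.2 ij.1.2 ij.2.2)) :=
      hs1a.mul_of_nonneg hs2a (fun a => mul_nonneg (hwnn a) (hκnn a _ _))
        (fun a => mul_nonneg (hwnn a) (hκnn a _ _))
    have heq : (∑' n : ℕ × ℕ, H (ij, n)) = (F ij.1 * G ij.2) *
        ((∑' a : ℕ, auxw s a * auxκ C₀ p a ij.1.1 ij.2.1) *
          (∑' a : ℕ, auxw s a * auxκ C₀ p a ij.1.2 ij.2.2)) := by
      rw [Summable.tsum_mul_tsum hs1a hs2a hprod, ← tsum_mul_left]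
    rw [heq]
    have hinner : ((∑' a : ℕ, auxw s a * auxκ C₀ p a ij.1.1 ij.2.1) *
          (∑' a : ℕ, auxw s a * auxκ C₀ p a ij.1.2 ij.2.2)) ≤
        (B * (auxw s ij.1.1 * auxw s ij.2.1)) * (B * (auxw s ij.1.2 * auxw s ij.2.2)) :=
      mul_le_mul (hcolb _ _) (hcolb _ _)
        (tsum_nonneg fun a => mul_nonneg (hwnn a) (hκnn a _ _))
        (mul_nonneg hB0.le (mul_nonneg (hwnn _) (hwnn _)))
    calc (F ij.1 * G ij.2) * _ ≤ (F ij.1 * G ij.2) *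
          ((B * (auxw s ij.1.1 * auxw s ij.2.1)) * (B * (auxw s ij.1.2 * auxw s ij.2.2))) :=
        mul_le_mul_of_nonneg_left hinner (mul_nonneg (norm_nonneg _) (norm_nonneg _))
      _ = B ^ 2 * ((auxw s ij.1.1 * auxw s ij.1.2 * F ij.1) *
            (auxw s ij.2.1 * auxw s ij.2.2 * G ij.2)) := by ring
  have hWFG : Summable (fun z : (ℕ × ℕ) × (ℕ × ℕ) =>
      (auxw s z.1.1 * auxw s z.1.2 * F z.1) * (auxw s z.2.1 * auxw s z.2.2 * G z.2)) :=
    hΦ'.mul_of_nonneg hΨ'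
      (fun i => mul_nonneg (mul_nonneg (hwnn _) (hwnn _)) (norm_nonneg _))
      (fun j => mul_nonneg (mul_nonneg (hwnn _) (hwnn _)) (norm_nonneg _))
  have hIJsum : Summable (fun ij : (ℕ × ℕ) × (ℕ × ℕ) => ∑' n : ℕ × ℕ, H (ij, n)) :=
    Summable.of_nonneg_of_le (fun ij => tsum_nonneg fun n => hHnn _) hcolsum (hWFG.mul_left (B ^ 2))
  have hHsm : Summable H :=
    (summable_prod_of_nonneg (fun x => hHnn x)).2 ⟨hsec, hIJsum⟩
  have hHswap : Summable (fun x : (ℕ × ℕ) × ((ℕ × ℕ) × (ℕ × ℕ)) => H (x.2, x.1)) :=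
    ((Equiv.prodComm _ _).summable_iff (f := H)).2 hHsm
  have hsecn : ∀ n : ℕ × ℕ, Summable (fun ij : (ℕ × ℕ) × (ℕ × ℕ) => H (ij, n)) :=
    fun n => ((summable_prod_of_nonneg (fun x => hHnn _)).1 hHswap).1 n
  have hNsum : Summable (fun n : ℕ × ℕ => ∑' ij : (ℕ × ℕ) × (ℕ × ℕ), H (ij, n)) :=
    ((summable_prod_of_nonneg (fun x => hHnn _)).1 hHswap).2
  -- termwise bound
  have hterm : ∀ (n : ℕ × ℕ) (ij : (ℕ × ℕ) × (ℕ × ℕ)),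
      auxw s n.1 * auxw s n.2 *
        ‖K₁ n.1 ij.1.1 ij.2.1 * K₂ n.2 ij.1.2 ij.2.2 * Φ ij.1 * Ψ ij.2‖ ≤ H (ij, n) := by
    intro n ij
    have e1 : ‖K₁ n.1 ij.1.1 ij.2.1‖ ≤ auxκ C₀ p n.1 ij.1.1 ij.2.1 := hK₁ _ _ _
    have e2 : ‖K₂ n.2 ij.1.2 ij.2.2‖ ≤ auxκ C₀ p n.2 ij.1.2 ij.2.2 := hK₂ _ _ _
    rw [norm_mul, norm_mul, norm_mul]
    exact aux_mul_le (hwnn _) (hwnn _) (norm_nonneg _) (norm_nonneg _)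
      (norm_nonneg _) (norm_nonneg _) e1 e2
  -- first statement
  have st1 : ∀ n : ℕ × ℕ, Summable (fun ij : (ℕ × ℕ) × (ℕ × ℕ) =>
      ‖K₁ n.1 ij.1.1 ij.2.1 * K₂ n.2 ij.1.2 ij.2.2 * Φ ij.1 * Ψ ij.2‖) := by
    intro n
    refine Summable.of_nonneg_of_le (fun ij => norm_nonneg _) (fun ij => ?_) (hsecn n)
    have hw1 : (1:ℝ) ≤ auxw s n.1 * auxw s n.2 := by
      nlinarith [auxw_one_le hs0 n.1, auxw_one_le hs0 n.2]
    calc ‖K₁ n.1 ij.1.1 ij.2.1 * K₂ n.2 ij.1.2 ij.2.2 * Φ ij.1 * Ψ ij.2‖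
        ≤ auxw s n.1 * auxw s n.2 *
            ‖K₁ n.1 ij.1.1 ij.2.1 * K₂ n.2 ij.1.2 ij.2.2 * Φ ij.1 * Ψ ij.2‖ :=
          le_mul_of_one_le_left (norm_nonneg _) hw1
      _ ≤ H (ij, n) := hterm n ij
  -- weighted norm of the convolution, termwise
  have hb2 : ∀ n : ℕ × ℕ, auxw s n.1 * auxw s n.2 *
      ‖∑' ij : (ℕ × ℕ) × (ℕ × ℕ), K₁ n.1 ij.1.1 ij.2.1 * K₂ n.2 ij.1.2 ij.2.2 * Φ ij.1 * Ψ ij.2‖ ≤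
      ∑' ij : (ℕ × ℕ) × (ℕ × ℕ), H (ij, n) := by
    intro n
    calc auxw s n.1 * auxw s n.2 *
        ‖∑' ij : (ℕ × ℕ) × (ℕ × ℕ), K₁ n.1 ij.1.1 ij.2.1 * K₂ n.2 ij.1.2 ij.2.2 * Φ ij.1 * Ψ ij.2‖
        ≤ auxw s n.1 * auxw s n.2 *
            ∑' ij : (ℕ × ℕ) × (ℕ × ℕ), ‖K₁ n.1 ij.1.1 ij.2.1 * K₂ n.2 ij.1.2 ij.2.2 * Φ ij.1 * Ψ ij.2‖ :=
          mul_le_mul_of_nonneg_left (norm_tsum_le_tsum_norm (st1 n)) (mul_nonneg (hwnn _) (hwnn _))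
      _ = ∑' ij : (ℕ × ℕ) × (ℕ × ℕ), auxw s n.1 * auxw s n.2 *
            ‖K₁ n.1 ij.1.1 ij.2.1 * K₂ n.2 ij.1.2 ij.2.2 * Φ ij.1 * Ψ ij.2‖ := tsum_mul_left.symm
      _ ≤ ∑' ij : (ℕ × ℕ) × (ℕ × ℕ), H (ij, n) :=
          Summable.tsum_le_tsum (fun ij => hterm n ij) ((st1 n).mul_left _) (hsecn n)
  have st2 : Summable (fun n : ℕ × ℕ => (1 + n.1 : ℝ) ^ s * (1 + n.2 : ℝ) ^ s *
      ‖∑' ij : (ℕ × ℕ) × (ℕ × ℕ), K₁ n.1 ij.1.1 ij.2.1 * K₂ n.2 ij.1.2 ij.2.2 * Φ ij.1 * Ψ ij.2‖) :=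
    Summable.of_nonneg_of_le (fun n => by positivity) (fun n => hb2 n) hNsum
  refine ⟨st1, st2, ?_⟩
  calc (∑' n : ℕ × ℕ, (1 + n.1 : ℝ) ^ s * (1 + n.2 : ℝ) ^ s *
        ‖∑' ij : (ℕ × ℕ) × (ℕ × ℕ), K₁ n.1 ij.1.1 ij.2.1 * K₂ n.2 ij.1.2 ij.2.2 * Φ ij.1 * Ψ ij.2‖)
      ≤ ∑' n : ℕ × ℕ, ∑' ij : (ℕ × ℕ) × (ℕ × ℕ), H (ij, n) :=
        Summable.tsum_le_tsum (fun n => hb2 n) st2 hNsum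
    _ = ∑' x : (ℕ × ℕ) × ((ℕ × ℕ) × (ℕ × ℕ)), H (x.2, x.1) :=
        (Summable.tsum_prod' hHswap (fun n => hsecn n)).symm
    _ = ∑' y : ((ℕ × ℕ) × (ℕ × ℕ)) × (ℕ × ℕ), H y :=
        Equiv.tsum_eq (Equiv.prodComm _ _) H
    _ = ∑' ij : (ℕ × ℕ) × (ℕ × ℕ), ∑' n : ℕ × ℕ, H (ij, n) := Summable.tsum_prod' hHsm hsec
    _ ≤ ∑' ij : (ℕ × ℕ) × (ℕ × ℕ), B ^ 2 *
          ((auxw s ij.1.1 * auxw s ij.1.2 * F ij.1) * (auxw s ij.2.1 * auxw s ij.2.2 * G ij.2)) :=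
        Summable.tsum_le_tsum hcolsum hIJsum (hWFG.mul_left (B ^ 2))
    _ = B ^ 2 * ∑' ij : (ℕ × ℕ) × (ℕ × ℕ),
          ((auxw s ij.1.1 * auxw s ij.1.2 * F ij.1) * (auxw s ij.2.1 * auxw s ij.2.2 * G ij.2)) :=
        tsum_mul_left
    _ = B ^ 2 * ((∑' i : ℕ × ℕ, auxw s i.1 * auxw s i.2 * F i) *
          (∑' j : ℕ × ℕ, auxw s j.1 * auxw s j.2 * G j)) := by
        rw [Summable.tsum_mul_tsum hΦ' hΨ' hWFG]
    _ = B ^ 2 * (∑' n : ℕ × ℕ, (1 + n.1 : ℝ) ^ s * (1 + n.2 : ℝ) ^ s * ‖Φ n‖) *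
          (∑' n : ℕ × ℕ, (1 + n.1 : ℝ) ^ s * (1 + n.2 : ℝ) ^ s * ‖Ψ n‖) := by
        simp only [auxw, hF, hG]
        ring
end

section
/- Let 𝕋 = [−1/2, 1/2] ⊂ ℝ. Let 0 < s < 1 and let p satisfy 1 < p < 2 and p − s > 1. Let C₀ > 0 and let K : ℕ³ × 𝕋³ → ℂ be measurable with |K(n,j₁,j₂,k,k₁,k₂)| ≤ C₀ (1 + |n − j₁ − j₂|)^(−p) for all n, j₁, j₂ ∈ ℕ and all k, k₁, k₂ ∈ 𝕋. Then there exists C > 0 such that for all families φ, ψ : ℕ → L¹(𝕋; ℂ) with ‖φ‖ = Σ_{n∈ℕ} (1+n)^s ∫_𝕋 |φₙ(k)| dk < ∞ and ‖ψ‖ < ∞ (same norm), the family defined by (φ ⋆ ψ)ₙ(k) = Σ_{j₁∈ℕ} Σ_{j₂∈ℕ} ∫_𝕋 ∫_𝕋 K(n,j₁,j₂,k,k₁,k₂) φ_{j₁}(k₁) ψ_{j₂}(k₂) dk₁ dk₂ satisfies ‖φ ⋆ ψ‖ ≤ C ‖φ‖ ‖ψ‖. -/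
/-!
Integrating out the torus variables with the kernel bound reduces the estimate to a discrete one
for `Aⱼ = ∫ |φⱼ|` and `Bⱼ = ∫ |ψⱼ|`. From `1 + n ≤ (1 + |n - j₁ - j₂|)(1 + j₁)(1 + j₂)` the weight
`(1 + n)^s` against the decay `(1 + |n - j₁ - j₂|)^(-p)` is at most
`(1 + |n - j₁ - j₂|)^(s - p) (1 + j₁)^s (1 + j₂)^s`. As `p - s > 1` the first factor is summable
over `ℤ`, so summing over `n` before `(j₁, j₂)` gives the constant `C₀ ∑_z (1 + |z|)^(s - p)`.
-/

open MeasureTheory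

lemma one_add_abs_add_le_mul (x y : ℝ) : 1 + |x + y| ≤ (1 + |x|) * (1 + |y|) := by
  nlinarith [abs_add_le x y, mul_nonneg (abs_nonneg x) (abs_nonneg y)]

lemma one_add_natCast_le_mul (n j₁ j₂ : ℕ) :
    (1 + n : ℝ) ≤ (1 + |(n : ℤ) - j₁ - j₂| : ℝ) * (1 + j₁) * (1 + j₂) := by
  set x : ℝ := n - j₁ - j₂
  calc (1 + n : ℝ) = 1 + |x + j₂ + j₁| := by
        rw [abs_of_nonneg (by simp [x])]; ring
    _ ≤ (1 + |x|) * (1 + |(j₂ : ℝ)|) * (1 + |(j₁ : ℝ)|) :=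
        (one_add_abs_add_le_mul _ _).trans
          (mul_le_mul_of_nonneg_right (one_add_abs_add_le_mul _ _) (by positivity))
    _ = (1 + |(n : ℤ) - j₁ - j₂| : ℝ) * (1 + j₁) * (1 + j₂) := by
        simp only [x, Nat.abs_cast, Int.cast_abs]; push_cast; ring

lemma one_add_natCast_rpow_mul_le {s : ℝ} (hs : 0 ≤ s) (p : ℝ) (n j₁ j₂ : ℕ) :
    (1 + n : ℝ) ^ s * (1 + |(n : ℤ) - j₁ - j₂| : ℝ) ^ (-p) ≤
      (1 + |(n : ℤ) - j₁ - j₂| : ℝ) ^ (s - p) * (1 + j₁ : ℝ) ^ s * (1 + j₂ : ℝ) ^ s := by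
  have hd : (0 : ℝ) < 1 + |(n : ℤ) - j₁ - j₂| := by positivity
  calc (1 + n : ℝ) ^ s * (1 + |(n : ℤ) - j₁ - j₂| : ℝ) ^ (-p)
      ≤ ((1 + |(n : ℤ) - j₁ - j₂| : ℝ) * (1 + j₁) * (1 + j₂)) ^ s *
          (1 + |(n : ℤ) - j₁ - j₂| : ℝ) ^ (-p) := by
        gcongr
        exact one_add_natCast_le_mul n j₁ j₂
    _ = _ := by
        rw [Real.mul_rpow (by positivity) (by positivity),
          Real.mul_rpow hd.le (by positivity), sub_eq_add_neg s p, Real.rpow_add hd]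
        ring

lemma summable_one_add_abs_rpow {r : ℝ} (hr : r < -1) :
    Summable fun z : ℤ => (1 + |z| : ℝ) ^ r := by
  have hnat : Summable fun n : ℕ => (1 + n : ℝ) ^ r :=
    ((summable_nat_add_iff 1).2 (Real.summable_nat_rpow.2 hr)).congr fun n => by
      push_cast; ring_nf
  exact .of_nat_of_neg (by simpa using hnat) (by simpa using hnat)

section Convolution

variable {g : ℤ → ℝ} {a b : ℕ → ℝ}

lemma tsum_convolution_fiber_le (hg0 : 0 ≤ g) (ha0 : 0 ≤ a) (hb0 : 0 ≤ b) (hg : Summable g)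
    (j : ℕ × ℕ) :
    ∑' n : ℕ, g (n - j.1 - j.2) * a j.1 * b j.2 ≤ (∑' z, g z) * (a j.1 * b j.2) := by
  simp_rw [sub_sub, tsum_mul_right, mul_assoc]
  gcongr
  · exact mul_nonneg (ha0 _) (hb0 _)
  · exact tsum_comp_le_tsum_of_inj hg hg0 (sub_left_injective.comp Nat.cast_injective)

lemma summable_convolution_prod (hg0 : 0 ≤ g) (ha0 : 0 ≤ a) (hb0 : 0 ≤ b)
    (hg : Summable g) (ha : Summable a) (hb : Summable b) :
    Summable fun x : ℕ × (ℕ × ℕ) => g (x.1 - x.2.1 - x.2.2) * a x.2.1 * b x.2.2 := by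
  have hnonneg (n : ℕ) (j : ℕ × ℕ) : 0 ≤ g (n - j.1 - j.2) * a j.1 * b j.2 :=
    mul_nonneg (mul_nonneg (hg0 _) (ha0 _)) (hb0 _)
  refine Summable.prod_symm ((summable_prod_of_nonneg
    (f := fun x : (ℕ × ℕ) × ℕ => g (x.2 - x.1.1 - x.1.2) * a x.1.1 * b x.1.2)
    fun x => hnonneg x.2 x.1).2 ⟨fun j => ?_, ?_⟩)
  · simp_rw [sub_sub]
    exact ((hg.comp_injective (sub_left_injective.comp Nat.cast_injective)).mul_right _).mul_right
      _
  · exact ((ha.mul_of_nonneg hb ha0 hb0).mul_left (∑' z, g z)).of_nonneg_of_le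
      (fun j => tsum_nonneg fun n => hnonneg n j) (tsum_convolution_fiber_le hg0 ha0 hb0 hg)

lemma tsum_convolution_le (hg0 : 0 ≤ g) (ha0 : 0 ≤ a) (hb0 : 0 ≤ b)
    (hg : Summable g) (ha : Summable a) (hb : Summable b) :
    ∑' n : ℕ, ∑' j : ℕ × ℕ, g (n - j.1 - j.2) * a j.1 * b j.2 ≤
      (∑' z, g z) * (∑' i, a i) * ∑' i, b i := by
  have h := summable_convolution_prod hg0 ha0 hb0 hg ha hb
  have hab := ha.mul_of_nonneg hb ha0 hb0
  calc ∑' n : ℕ, ∑' j : ℕ × ℕ, g (n - j.1 - j.2) * a j.1 * b j.2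
      = ∑' j : ℕ × ℕ, ∑' n : ℕ, g (n - j.1 - j.2) * a j.1 * b j.2 :=
        (h.tsum_comm' h.prod_factor h.prod_symm.prod_factor).symm
    _ ≤ ∑' j : ℕ × ℕ, (∑' z, g z) * (a j.1 * b j.2) :=
        h.prod_symm.prod.tsum_le_tsum (tsum_convolution_fiber_le hg0 ha0 hb0 hg) (hab.mul_left _)
    _ = (∑' z, g z) * (∑' i, a i) * ∑' i, b i := by
        rw [tsum_mul_left, ← ha.tsum_mul_tsum hb hab, mul_assoc]

end Convolution

lemma summable_and_one_add_rpow_mul_tsum_le {s : ℝ} (hs : 0 ≤ s) (p : ℝ) {A B : ℕ → ℝ}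
    (hA : 0 ≤ A) (hB : 0 ≤ B) (n : ℕ)
    (h : Summable fun j : ℕ × ℕ => (1 + |(n : ℤ) - j.1 - j.2| : ℝ) ^ (s - p) *
      ((1 + j.1 : ℝ) ^ s * A j.1) * ((1 + j.2 : ℝ) ^ s * B j.2)) :
    Summable (fun j : ℕ × ℕ => (1 + |(n : ℤ) - j.1 - j.2| : ℝ) ^ (-p) * A j.1 * B j.2) ∧
      (1 + n : ℝ) ^ s * ∑' j : ℕ × ℕ, (1 + |(n : ℤ) - j.1 - j.2| : ℝ) ^ (-p) * A j.1 * B j.2 ≤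
        ∑' j : ℕ × ℕ, (1 + |(n : ℤ) - j.1 - j.2| : ℝ) ^ (s - p) *
          ((1 + j.1 : ℝ) ^ s * A j.1) * ((1 + j.2 : ℝ) ^ s * B j.2) := by
  have hle (j : ℕ × ℕ) :
      (1 + n : ℝ) ^ s * ((1 + |(n : ℤ) - j.1 - j.2| : ℝ) ^ (-p) * A j.1 * B j.2) ≤
      (1 + |(n : ℤ) - j.1 - j.2| : ℝ) ^ (s - p) *
        ((1 + j.1 : ℝ) ^ s * A j.1) * ((1 + j.2 : ℝ) ^ s * B j.2) := by
    linear_combination mul_le_mul_of_nonneg_right (one_add_natCast_rpow_mul_le hs p n j.1 j.2)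
      (mul_nonneg (hA j.1) (hB j.2))
  have hsum : Summable fun j : ℕ × ℕ => (1 + |(n : ℤ) - j.1 - j.2| : ℝ) ^ (-p) * A j.1 * B j.2 :=
    h.of_nonneg_of_le (fun j => mul_nonneg (mul_nonneg (by positivity) (hA _)) (hB _))
      fun j => (le_mul_of_one_le_left (mul_nonneg (mul_nonneg (by positivity) (hA _)) (hB _))
        (Real.one_le_rpow (by simp) hs)).trans (hle j)
  exact ⟨hsum, tsum_mul_left.symm.trans_le ((hsum.mul_left _).tsum_le_tsum hle h)⟩

section Integrals

variable {α β γ 𝕜 : Type*} [MeasurableSpace α] [MeasurableSpace β] [MeasurableSpace γ] [RCLike 𝕜]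
  {μ : Measure γ} {μ₁ : Measure α} {μ₂ : Measure β}

lemma norm_integral_integral_mul_le {K : α → β → 𝕜} {φ : α → 𝕜} {ψ : β → 𝕜} {c : ℝ}
    (hφ : Integrable φ μ₁) (hψ : Integrable ψ μ₂) (hK : ∀ᵐ x ∂μ₁, ∀ᵐ y ∂μ₂, ‖K x y‖ ≤ c) :
    ‖∫ x, ∫ y, K x y * φ x * ψ y ∂μ₂ ∂μ₁‖ ≤ c * (∫ x, ‖φ x‖ ∂μ₁) * ∫ y, ‖ψ y‖ ∂μ₂ := by
  calc ‖∫ x, ∫ y, K x y * φ x * ψ y ∂μ₂ ∂μ₁‖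
      ≤ ∫ x, c * ‖φ x‖ * ∫ y, ‖ψ y‖ ∂μ₂ ∂μ₁ := by
        refine norm_integral_le_of_norm_le ((hφ.norm.const_mul c).mul_const _) ?_
        filter_upwards [hK] with x hx
        rw [← integral_const_mul]
        refine norm_integral_le_of_norm_le (hψ.norm.const_mul _) ?_
        filter_upwards [hx] with y hy
        rw [norm_mul, norm_mul]
        gcongr
    _ = c * (∫ x, ‖φ x‖ ∂μ₁) * ∫ y, ‖ψ y‖ ∂μ₂ := by
        rw [integral_mul_const, integral_const_mul]

lemma integral_norm_tsum_integral_integral_le [IsProbabilityMeasure μ] {ι κ : Type*}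
    {K : ι → κ → γ → α → β → 𝕜} {φ : ι → α → 𝕜} {ψ : κ → β → 𝕜} {c : ι → κ → ℝ}
    (hφ : ∀ i, Integrable (φ i) μ₁) (hψ : ∀ i, Integrable (ψ i) μ₂)
    (hK : ∀ᵐ k ∂μ, ∀ i j, ∀ᵐ x ∂μ₁, ∀ᵐ y ∂μ₂, ‖K i j k x y‖ ≤ c i j)
    (hc : Summable fun j : ι × κ => c j.1 j.2 * (∫ x, ‖φ j.1 x‖ ∂μ₁) * ∫ y, ‖ψ j.2 y‖ ∂μ₂) :
    ∫ k, ‖∑' j : ι × κ, ∫ x, ∫ y, K j.1 j.2 k x y * φ j.1 x * ψ j.2 y ∂μ₂ ∂μ₁‖ ∂μ ≤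
      ∑' j : ι × κ, c j.1 j.2 * (∫ x, ‖φ j.1 x‖ ∂μ₁) * ∫ y, ‖ψ j.2 y‖ ∂μ₂ := by
  refine (Real.le_norm_self _).trans
    ((norm_integral_le_of_norm_le_const ?_).trans_eq (by rw [probReal_univ, mul_one]))
  filter_upwards [hK] with k hk
  rw [norm_norm]
  exact tsum_of_norm_bounded hc.hasSum fun j =>
    norm_integral_integral_mul_le (hφ _) (hψ _) (hk _ _)

lemma one_add_natCast_rpow_mul_integral_norm_tsum_le [IsProbabilityMeasure μ] {s p C₀ : ℝ}
    (hs : 0 ≤ s) (hC₀ : 0 ≤ C₀) (n : ℕ) {K : ℕ → ℕ → γ → α → β → 𝕜} {φ : ℕ → α → 𝕜}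
    {ψ : ℕ → β → 𝕜} (hφ : ∀ i, Integrable (φ i) μ₁) (hψ : ∀ i, Integrable (ψ i) μ₂)
    (hK : ∀ᵐ k ∂μ, ∀ j₁ j₂ : ℕ, ∀ᵐ x ∂μ₁, ∀ᵐ y ∂μ₂,
      ‖K j₁ j₂ k x y‖ ≤ C₀ * (1 + |(n : ℤ) - j₁ - j₂| : ℝ) ^ (-p))
    (hconv : Summable fun j : ℕ × ℕ => (1 + |(n : ℤ) - j.1 - j.2| : ℝ) ^ (s - p) *
      ((1 + j.1 : ℝ) ^ s * ∫ x, ‖φ j.1 x‖ ∂μ₁) * ((1 + j.2 : ℝ) ^ s * ∫ y, ‖ψ j.2 y‖ ∂μ₂)) :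
    (1 + n : ℝ) ^ s *
        ∫ k, ‖∑' j : ℕ × ℕ, ∫ x, ∫ y, K j.1 j.2 k x y * φ j.1 x * ψ j.2 y ∂μ₂ ∂μ₁‖ ∂μ ≤
      C₀ * ∑' j : ℕ × ℕ, (1 + |(n : ℤ) - j.1 - j.2| : ℝ) ^ (s - p) *
        ((1 + j.1 : ℝ) ^ s * ∫ x, ‖φ j.1 x‖ ∂μ₁) * ((1 + j.2 : ℝ) ^ s * ∫ y, ‖ψ j.2 y‖ ∂μ₂) := by
  obtain ⟨hsum, hle⟩ := summable_and_one_add_rpow_mul_tsum_le hs p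
    (fun j => integral_nonneg fun x => norm_nonneg (φ j x))
    (fun j => integral_nonneg fun y => norm_nonneg (ψ j y)) n hconv
  calc (1 + n : ℝ) ^ s *
        ∫ k, ‖∑' j : ℕ × ℕ, ∫ x, ∫ y, K j.1 j.2 k x y * φ j.1 x * ψ j.2 y ∂μ₂ ∂μ₁‖ ∂μ
      ≤ (1 + n : ℝ) ^ s * ∑' j : ℕ × ℕ, C₀ * (1 + |(n : ℤ) - j.1 - j.2| : ℝ) ^ (-p) *
          (∫ x, ‖φ j.1 x‖ ∂μ₁) * ∫ y, ‖ψ j.2 y‖ ∂μ₂ := by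
        gcongr
        exact integral_norm_tsum_integral_integral_le hφ hψ hK
          ((hsum.mul_left C₀).congr fun j => by ring)
    _ = C₀ * ((1 + n : ℝ) ^ s * ∑' j : ℕ × ℕ, (1 + |(n : ℤ) - j.1 - j.2| : ℝ) ^ (-p) *
          (∫ x, ‖φ j.1 x‖ ∂μ₁) * ∫ y, ‖ψ j.2 y‖ ∂μ₂) := by
        simp_rw [mul_assoc C₀, tsum_mul_left]; ring
    _ ≤ _ := mul_le_mul_of_nonneg_left hle hC₀

end Integrals

theorem l1s_L1_kernel_convolution_estimate_general
    (s p C₀ : ℝ) (hs0 : 0 < s)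
    (hps : 1 < p - s) (hC₀ : 0 < C₀)
    (K : ℕ → ℕ → ℕ → ℝ → ℝ → ℝ → ℂ)
    (hK : ∀ (n j₁ j₂ : ℕ) (k k₁ k₂ : ℝ),
      k ∈ Set.Icc (-(1/2) : ℝ) (1/2) → k₁ ∈ Set.Icc (-(1/2) : ℝ) (1/2) →
      k₂ ∈ Set.Icc (-(1/2) : ℝ) (1/2) →
      ‖K n j₁ j₂ k k₁ k₂‖ ≤ C₀ * (1 + |(n : ℤ) - j₁ - j₂| : ℝ) ^ (-p)) :
    ∃ C > 0, ∀ φ ψ : ℕ → ℝ → ℂ,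
      (∀ n : ℕ, IntegrableOn (φ n) (Set.Icc (-(1/2) : ℝ) (1/2))) →
      (∀ n : ℕ, IntegrableOn (ψ n) (Set.Icc (-(1/2) : ℝ) (1/2))) →
      Summable (fun n : ℕ => (1 + n : ℝ) ^ s * ∫ k in Set.Icc (-(1/2) : ℝ) (1/2), ‖φ n k‖) →
      Summable (fun n : ℕ => (1 + n : ℝ) ^ s * ∫ k in Set.Icc (-(1/2) : ℝ) (1/2), ‖ψ n k‖) →
      Summable (fun n : ℕ => (1 + n : ℝ) ^ s * ∫ k in Set.Icc (-(1/2) : ℝ) (1/2),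
        ‖∑' j : ℕ × ℕ, ∫ k₁ in Set.Icc (-(1/2) : ℝ) (1/2),
          ∫ k₂ in Set.Icc (-(1/2) : ℝ) (1/2), K n j.1 j.2 k k₁ k₂ * φ j.1 k₁ * ψ j.2 k₂‖) ∧
      (∑' n : ℕ, (1 + n : ℝ) ^ s * ∫ k in Set.Icc (-(1/2) : ℝ) (1/2),
        ‖∑' j : ℕ × ℕ, ∫ k₁ in Set.Icc (-(1/2) : ℝ) (1/2),
          ∫ k₂ in Set.Icc (-(1/2) : ℝ) (1/2), K n j.1 j.2 k k₁ k₂ * φ j.1 k₁ * ψ j.2 k₂‖) ≤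
        C * (∑' n : ℕ, (1 + n : ℝ) ^ s * ∫ k in Set.Icc (-(1/2) : ℝ) (1/2), ‖φ n k‖) *
          (∑' n : ℕ, (1 + n : ℝ) ^ s * ∫ k in Set.Icc (-(1/2) : ℝ) (1/2), ‖ψ n k‖) := by
  set T := Set.Icc (-(1/2) : ℝ) (1/2)
  have : IsProbabilityMeasure (volume.restrict T) := ⟨by norm_num [T, Real.volume_Icc]⟩
  set g : ℤ → ℝ := fun z => (1 + |z| : ℝ) ^ (s - p)
  have hg0 : 0 ≤ g := fun z => by positivity
  have hg : Summable g := summable_one_add_abs_rpow (by linarith)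
  refine ⟨C₀ * ∑' z, g z, mul_pos hC₀ (hg.tsum_pos hg0 0 (by simp [g])),
    fun φ ψ hφ hψ ha hb => ?_⟩
  have ha0 : 0 ≤ fun n : ℕ => (1 + n : ℝ) ^ s * ∫ k in T, ‖φ n k‖ :=
    fun n => mul_nonneg (by positivity) (integral_nonneg fun _ => norm_nonneg _)
  have hb0 : 0 ≤ fun n : ℕ => (1 + n : ℝ) ^ s * ∫ k in T, ‖ψ n k‖ :=
    fun n => mul_nonneg (by positivity) (integral_nonneg fun _ => norm_nonneg _)
  have hconv := summable_convolution_prod hg0 ha0 hb0 hg ha hb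
  have key (n : ℕ) := one_add_natCast_rpow_mul_integral_norm_tsum_le (μ := volume.restrict T)
    hs0.le hC₀.le n hφ hψ
    (ae_restrict_of_forall_mem measurableSet_Icc fun k hk j₁ j₂ =>
      ae_restrict_of_forall_mem measurableSet_Icc fun k₁ hk₁ =>
        ae_restrict_of_forall_mem measurableSet_Icc fun k₂ hk₂ => hK n j₁ j₂ k k₁ k₂ hk hk₁ hk₂)
    (hconv.prod_factor n)
  have hQ := hconv.prod.mul_left C₀
  have hF := hQ.of_nonneg_of_le (fun n => by positivity) key
  refine ⟨hF, (hF.tsum_le_tsum key hQ).trans ?_⟩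
  rw [tsum_mul_left, mul_assoc C₀, mul_assoc C₀]
  exact mul_le_mul_of_nonneg_left (tsum_convolution_le hg0 ha0 hb0 hg ha hb) hC₀.le

/-- Banach-algebra type estimate in the space `l¹ₛ(ℕ, L¹(𝕋))`, with
`𝕋 = [-1/2, 1/2]`, for the convolution with a kernel `K(n,j₁,j₂;k,k₁,k₂)` bounded by
`C₀ (1 + |n - j₁ - j₂|)^(-p)`. -/
theorem l1s_L1_kernel_convolution_estimate
    (s p C₀ : ℝ) (hs0 : 0 < s) (hs1 : s < 1)
    (hp1 : 1 < p) (hp2 : p < 2) (hps : 1 < p - s) (hC₀ : 0 < C₀)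
    (K : ℕ → ℕ → ℕ → ℝ → ℝ → ℝ → ℂ)
    (hKmeas : ∀ n j₁ j₂ : ℕ, Measurable (fun x : ℝ × ℝ × ℝ => K n j₁ j₂ x.1 x.2.1 x.2.2))
    (hK : ∀ (n j₁ j₂ : ℕ) (k k₁ k₂ : ℝ),
      k ∈ Set.Icc (-(1/2) : ℝ) (1/2) → k₁ ∈ Set.Icc (-(1/2) : ℝ) (1/2) →
      k₂ ∈ Set.Icc (-(1/2) : ℝ) (1/2) →
      ‖K n j₁ j₂ k k₁ k₂‖ ≤ C₀ * (1 + |(n : ℤ) - j₁ - j₂| : ℝ) ^ (-p)) :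
    ∃ C > 0, ∀ φ ψ : ℕ → ℝ → ℂ,
      (∀ n : ℕ, IntegrableOn (φ n) (Set.Icc (-(1/2) : ℝ) (1/2))) →
      (∀ n : ℕ, IntegrableOn (ψ n) (Set.Icc (-(1/2) : ℝ) (1/2))) →
      Summable (fun n : ℕ => (1 + n : ℝ) ^ s * ∫ k in Set.Icc (-(1/2) : ℝ) (1/2), ‖φ n k‖) →
      Summable (fun n : ℕ => (1 + n : ℝ) ^ s * ∫ k in Set.Icc (-(1/2) : ℝ) (1/2), ‖ψ n k‖) →
      Summable (fun n : ℕ => (1 + n : ℝ) ^ s * ∫ k in Set.Icc (-(1/2) : ℝ) (1/2),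
        ‖∑' j : ℕ × ℕ, ∫ k₁ in Set.Icc (-(1/2) : ℝ) (1/2),
          ∫ k₂ in Set.Icc (-(1/2) : ℝ) (1/2), K n j.1 j.2 k k₁ k₂ * φ j.1 k₁ * ψ j.2 k₂‖) ∧
      (∑' n : ℕ, (1 + n : ℝ) ^ s * ∫ k in Set.Icc (-(1/2) : ℝ) (1/2),
        ‖∑' j : ℕ × ℕ, ∫ k₁ in Set.Icc (-(1/2) : ℝ) (1/2),
          ∫ k₂ in Set.Icc (-(1/2) : ℝ) (1/2), K n j.1 j.2 k k₁ k₂ * φ j.1 k₁ * ψ j.2 k₂‖) ≤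
        C * (∑' n : ℕ, (1 + n : ℝ) ^ s * ∫ k in Set.Icc (-(1/2) : ℝ) (1/2), ‖φ n k‖) *
          (∑' n : ℕ, (1 + n : ℝ) ^ s * ∫ k in Set.Icc (-(1/2) : ℝ) (1/2), ‖ψ n k‖) :=
  l1s_L1_kernel_convolution_estimate_general s p C₀ hs0 hps hC₀ K hK
end

section
/- Let w : ℝ × ℝ → ℂ be continuous and bounded, and 2π-periodic in its first variable: w(x + 2π, k) = w(x, k) for all x, k ∈ ℝ. Let f ∈ L¹(ℝ; ℂ). Then the function φ(x) = ∫_ℝ f(k) e^{ikx} w(x, k) dk tends to 0 as |x| → ∞. -/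
/-! Write `Φ x y = ∫ f(k) e^{ikx} w(y, k) dk`; by periodicity the integral in question is
`Φ x (x mod 2π)`. For each fixed `y`, `Φ · y → 0` by the Riemann–Lebesgue lemma applied to
`f · w(y, ·)`. The family `Φ x` is equicontinuous in `y`, because
`|Φ x y - Φ x y'| ≤ ∫ |f| |w(y, ·) - w(y', ·)|` does not depend on `x` and tends to `0` by
dominated convergence. On the compact interval `[0, 2π]` equicontinuity upgrades pointwise
convergence to uniform convergence, which absorbs the dependence of `y = x mod 2π` on `x`. -/

open MeasureTheory Filter Topology

theorem tendsto_integral_mul_exp_I_mul_cocompact (g : ℝ → ℂ) :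
    Tendsto (fun x : ℝ => ∫ k : ℝ, g k * Complex.exp (Complex.I * k * x))
      (cocompact ℝ) (𝓝 0) := by
  have hc : -(2 * Real.pi)⁻¹ ≠ 0 := by simp [Real.pi_ne_zero]
  refine ((Real.tendsto_integral_exp_smul_cocompact g).comp
    (tendsto_cocompact_mul_left₀ hc)).congr fun x => integral_congr_ae <| .of_forall fun k => ?_
  -- `𝐞 (-(k * (-(2π)⁻¹ * x))) = e^{ikx}`
  simp only [Circle.smul_def, Real.fourierChar_apply, smul_eq_mul]
  rw [mul_comm]
  congr 2
  push_cast
  field_simp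

theorem equicontinuous_integral_mul_of_dominated {α X ι 𝕜 : Type*} [MeasurableSpace α]
    {μ : Measure α} [TopologicalSpace X] [FirstCountableTopology X] [RCLike 𝕜]
    {g : ι → α → 𝕜} {bound : α → ℝ} (hbound : Integrable bound μ)
    (hg_meas : ∀ i, AEStronglyMeasurable (g i) μ) (hg : ∀ i k, ‖g i k‖ ≤ bound k)
    {w : X → α → 𝕜} {M : ℝ} (hw_meas : ∀ y, AEStronglyMeasurable (w y) μ)
    (hw_bdd : ∀ y k, ‖w y k‖ ≤ M) (hw_cont : ∀ k, Continuous (w · k)) :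
    Equicontinuous fun i y => ∫ k, g i k * w y k ∂μ := by
  have hgw_int : ∀ i y, Integrable (fun k => g i k * w y k) μ := fun i y =>
    (hbound.mono' (hg_meas i) (.of_forall (hg i))).mul_bdd (hw_meas y) (.of_forall (hw_bdd y))
  intro y₀
  have hdiff_meas : ∀ y, AEStronglyMeasurable (fun k => ‖w y₀ k - w y k‖) μ := fun y =>
    ((hw_meas y₀).sub (hw_meas y)).norm
  have hdiff_bdd : ∀ y k, ‖‖w y₀ k - w y k‖‖ ≤ 2 * M := fun y k => by
    rw [norm_norm, two_mul]
    exact (norm_sub_le _ _).trans (add_le_add (hw_bdd y₀ k) (hw_bdd y k))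
  refine Metric.equicontinuousAt_of_continuity_modulus
    (fun y => ∫ k, bound k * ‖w y₀ k - w y k‖ ∂μ) ?_ _ (.of_forall fun y i => ?_)
  · have hlim (k : α) : Tendsto (fun y => bound k * ‖w y₀ k - w y k‖) (𝓝 y₀) (𝓝 0) := by
      have hcont : Continuous fun y => bound k * ‖w y₀ k - w y k‖ := by fun_prop
      simpa using hcont.tendsto y₀
    simpa using tendsto_integral_filter_of_dominated_convergence (fun k => ‖bound k‖ * (2 * M))
      (.of_forall fun y => hbound.aestronglyMeasurable.mul (hdiff_meas y))
      (.of_forall fun y => .of_forall fun k => by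
        rw [Pi.mul_apply, norm_mul]
        exact mul_le_mul_of_nonneg_left (hdiff_bdd y k) (norm_nonneg _))
      (hbound.norm.mul_const _) (.of_forall hlim)
  · rw [dist_eq_norm, ← integral_sub (hgw_int i y₀) (hgw_int i y)]
    refine norm_integral_le_of_norm_le
      (hbound.mul_bdd (hdiff_meas y) (.of_forall (hdiff_bdd y))) (.of_forall fun k => ?_)
    rw [← mul_sub, norm_mul]
    exact mul_le_mul_of_nonneg_right (hg i k) (norm_nonneg _)

theorem tendsto_apply_of_equicontinuous {ι X E : Type*} [TopologicalSpace X] [CompactSpace X]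
    [PseudoMetricSpace E] {F : ι → X → E} (hF : Equicontinuous F) {l : Filter ι} {c : E}
    (hFc : ∀ y, Tendsto (F · y) l (𝓝 c)) (y : ι → X) :
    Tendsto (fun i => F i (y i)) l (𝓝 c) := by
  have hunif : TendstoUniformly F (fun _ => c) l := UniformFun.tendsto_iff_tendstoUniformly.1
    ((hF.tendsto_uniformFun_iff_pi l _).2 (tendsto_pi_nhds.2 hFc))
  rw [Metric.tendsto_nhds]
  intro ε hε
  filter_upwards [Metric.tendstoUniformly_iff.1 hunif ε hε] with i hi
  rw [dist_comm]
  exact hi (y i)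

/-- Riemann–Lebesgue type decay for Fourier-type integrals with a
continuous, bounded, `2π`-periodically modulated amplitude `w(x,k)`. -/
theorem riemann_lebesgue_bloch_decay
    (w : ℝ → ℝ → ℂ)
    (hw_cont : Continuous fun q : ℝ × ℝ => w q.1 q.2)
    (hw_bdd : ∃ M : ℝ, ∀ x k : ℝ, ‖w x k‖ ≤ M)
    (hw_per : ∀ x k : ℝ, w (x + 2 * Real.pi) k = w x k)
    (f : ℝ → ℂ) (hf : Integrable f) :
    Tendsto (fun x : ℝ => ∫ k : ℝ, f k * Complex.exp (Complex.I * k * x) * w x k)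
      (cocompact ℝ) (nhds 0) := by
  obtain ⟨M, hM⟩ := hw_bdd
  have hp : 0 < 2 * Real.pi := Real.two_pi_pos
  let y (x : ℝ) : Set.Icc 0 (2 * Real.pi) :=
    ⟨toIcoMod hp 0 x, Set.Ico_subset_Icc_self (by simpa using toIcoMod_mem_Ico hp 0 x)⟩
  have hw_y (x k : ℝ) : w x k = w (y x) k :=
    ((show Function.Periodic (w · k) (2 * Real.pi) from (hw_per · k)).sub_zsmul_eq
      (toIcoDiv hp 0 x)).symm
  have hequi := equicontinuous_integral_mul_of_dominated hf.norm
    (g := fun (x k : ℝ) => f k * Complex.exp (Complex.I * k * x))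
    (fun x => hf.aestronglyMeasurable.mul (by fun_prop))
    (fun x k => by simp [Complex.norm_exp])
    (w := fun (t : Set.Icc 0 (2 * Real.pi)) (k : ℝ) => w t k)
    (fun t => (hw_cont.comp (continuous_const.prodMk continuous_id)).aestronglyMeasurable)
    (fun t => hM t) (fun k => hw_cont.comp (continuous_subtype_val.prodMk continuous_const))
  refine (tendsto_apply_of_equicontinuous hequi (fun t => ?_) y).congr fun x => by
    simp only [← hw_y]
  simp_rw [mul_right_comm (f _)]
  exact tendsto_integral_mul_exp_I_mul_cocompact _
end
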